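/- Let (p_k, q_k), k ∈ ℕ, be the integers determined by p_k + q_k·√10 = (3 + √10)^(k+1). Then for every k ∈ ℕ the integers p_{2k} and q_{2k} are odd, so that d_k := (p_{2k} − 3)/2 and m_k := (q_{2k} − 1)/2 are nonnegative integers, and these satisfy d_k·(d_k + 3) = 10·m_k·(m_k + 1). -/
import Mathlib

private def PQ : ℕ → ℤ × ℤ
  | 0 => (3, 1)
  | k + 1 => (3 * (PQ k).1 + 10 * (PQ k).2, (PQ k).1 + 3 * (PQ k).2)

private lemma irr10 : Irrational (Real.sqrt 10) := by
  rw [show (10 : ℝ) = ((10 : ℕ) : ℝ) by norm_num, irrational_sqrt_natCast_iff]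
  rintro ⟨r, hr⟩
  have : r ≤ 10 := by nlinarith
  interval_cases r <;> omega

private lemma PQ_spec (k : ℕ) :
    ((PQ k).1 : ℝ) + ((PQ k).2 : ℝ) * Real.sqrt 10 = (3 + Real.sqrt 10) ^ (k + 1) := by
  induction k with
  | zero => simp [PQ]
  | succ k ih =>
    have h10 : Real.sqrt 10 * Real.sqrt 10 = 10 := Real.mul_self_sqrt (by norm_num)
    rw [pow_succ, ← ih]
    simp only [PQ]
    push_cast
    ring_nf
    rw [Real.sq_sqrt (by norm_num : (10:ℝ) ≥ 0)]
    ring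

private lemma uniq {a b c d : ℤ} (h : (a : ℝ) + b * Real.sqrt 10 = c + d * Real.sqrt 10) :
    a = c ∧ b = d := by
  by_cases hbd : b = d
  · subst hbd
    constructor
    · exact_mod_cast add_right_cancel h
    · rfl
  · exfalso
    have hbd' : ((b - d : ℤ) : ℝ) ≠ 0 := by exact_mod_cast sub_ne_zero.mpr hbd
    have key : Real.sqrt 10 * ((b - d : ℤ) : ℝ) = ((c - a : ℤ) : ℝ) := by
      push_cast; linarith
    have hdiv : Real.sqrt 10 = ((c - a : ℤ) : ℝ) / ((b - d : ℤ) : ℝ) :=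
      (eq_div_iff hbd').mpr key
    apply irr10
    exact ⟨((c - a : ℤ) : ℚ) / ((b - d : ℤ) : ℚ), by rw [hdiv]; push_cast; ring⟩

private lemma PQ_pell (k : ℕ) :
    (PQ k).1 ^ 2 - 10 * (PQ k).2 ^ 2 = (-1) ^ (k + 1) := by
  induction k with
  | zero => simp [PQ]
  | succ k ih => simp only [PQ]; rw [pow_succ]; linear_combination (-1 : ℤ) * ih

private lemma PQ_pos (k : ℕ) : 3 ≤ (PQ k).1 ∧ 1 ≤ (PQ k).2 := by
  induction k with
  | zero => simp [PQ]
  | succ k ih => simp only [PQ]; omega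

private lemma P_odd (k : ℕ) : Odd (PQ k).1 := by
  induction k with
  | zero => exact ⟨1, by simp [PQ]⟩
  | succ k ih => simp only [PQ]; rcases ih with ⟨t, ht⟩; exact ⟨t + (PQ k).1 + 5 * (PQ k).2, by omega⟩

private lemma Q_even_odd (k : ℕ) : Odd (PQ (2 * k)).2 := by
  induction k with
  | zero => exact ⟨0, by simp [PQ]⟩
  | succ k ih =>
    have h : 2 * (k + 1) = (2 * k) + 1 + 1 := by ring
    rw [h]
    simp only [PQ]
    rcases ih with ⟨t, ht⟩
    rcases P_odd (2 * k) with ⟨s, hs⟩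
    exact ⟨6 * s + 19 * t + 12, by omega⟩

/-- Let `(p k, q k)` be determined by `p k + q ·√10 = (3 + √10)^(k+1)`. Then for every
`k` the integers `p (2k)` and `q (2k)` are odd, so that `d = (p (2k) − 3)/2` and
`m = (q (2k) − 1)/2` are nonnegative integers, and these satisfy
`d·(d + 3) = 10·m·(m + 1)`. -/
theorem stmt_7 (p q : ℕ → ℤ)
    (hpq : ∀ k : ℕ,
      (p k : ℝ) + (q k : ℝ) * Real.sqrt 10 = (3 + Real.sqrt 10) ^ (k + 1)) :
    ∀ k : ℕ, Odd (p (2 * k)) ∧ Odd (q (2 * k)) ∧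
      ∃ d m : ℤ, 0 ≤ d ∧ 0 ≤ m ∧
        p (2 * k) = 2 * d + 3 ∧ q (2 * k) = 2 * m + 1 ∧
        d * (d + 3) = 10 * (m * (m + 1)) := by
  have heq : ∀ k, p k = (PQ k).1 ∧ q k = (PQ k).2 := fun k =>
    uniq ((hpq k).trans (PQ_spec k).symm)
  intro k
  obtain ⟨hp, hq⟩ := heq (2 * k)
  have hodd : Odd (p (2 * k)) := hp ▸ P_odd (2 * k)
  have hqodd : Odd (q (2 * k)) := hq ▸ Q_even_odd k
  have hpos := PQ_pos (2 * k)
  have hpell : p (2*k) ^ 2 - 10 * q (2*k) ^ 2 = -1 := by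
    rw [hp, hq, PQ_pell]
    rw [pow_succ, pow_mul]
    norm_num
  refine ⟨hodd, hqodd, (p (2*k) - 3) / 2, (q (2*k) - 1) / 2, ?_, ?_, ?_, ?_, ?_⟩
  · rcases hodd with ⟨t, ht⟩; omega
  · rcases hqodd with ⟨t, ht⟩; omega
  · rcases hodd with ⟨t, ht⟩; omega
  · rcases hqodd with ⟨t, ht⟩; omega
  · rcases hodd with ⟨t, ht⟩
    rcases hqodd with ⟨s, hs⟩
    have hd : (p (2*k) - 3) / 2 = t - 1 := by omega
    have hm : (q (2*k) - 1) / 2 = s := by omega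
    rw [hd, hm]
    nlinarith [hpell, ht, hs]
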